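/- arXiv:2204.08703 — 5 statements merged into one kernel-verified Lean document; each statement's English description precedes it below -/
import Mathlib

section
/- Let H be an R-subset system, X a T₀ topological space and Y an H-sober T₀ space. Then the function space C(X,Y) equipped with the topology of pointwise convergence is H-sober. -/
open TopologicalSpace

universe u v

/-- The specialization order on a topological space: `a ≤ b` iff `a ∈ closure {b}`. -/
def specLe {Y : Type*} [TopologicalSpace Y] (a b : Y) : Prop := a ∈ closure ({b} : Set Y)

/-- The pointwise (specialization) order on continuous maps. -/
def pwLe {X : Type*} {Y : Type*} [TopologicalSpace X] [TopologicalSpace Y]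
    (f g : C(X, Y)) : Prop := ∀ x : X, specLe (f x) (g x)

/-- `g` is a least upper bound of `D` with respect to the relation `le`. -/
def IsLUBrel {α : Type*} (le : α → α → Prop) (D : Set α) (g : α) : Prop :=
  (∀ f ∈ D, le f g) ∧ ∀ h : α, (∀ f ∈ D, le f h) → le g h

/-- Scott-open set with respect to the relation `le`: an upper set inaccessible by
suprema of directed sets (whenever those suprema exist). -/
def relScottOpen {α : Type*} (le : α → α → Prop) (U : Set α) : Prop :=
  (∀ ⦃a b : α⦄, a ∈ U → le a b → b ∈ U) ∧
  ∀ D : Set α, D.Nonempty → DirectedOn le D →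
    ∀ g : α, IsLUBrel le D g → g ∈ U → (D ∩ U).Nonempty

/-- The Scott topology of the relation `le`. -/
def relScott {α : Type*} (le : α → α → Prop) : TopologicalSpace α :=
  TopologicalSpace.generateFrom {U : Set α | relScottOpen le U}

/-- Scott-open subset of a complete lattice. -/
def IsScottOpenLat {L : Type*} [CompleteLattice L] (𝒰 : Set L) : Prop :=
  IsUpperSet 𝒰 ∧
  ∀ D : Set L, D.Nonempty → DirectedOn (· ≤ ·) D → sSup D ∈ 𝒰 → (D ∩ 𝒰).Nonempty

/-- The Isbell topology on `C(X, Y)`, generated by the sets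
`N(ℋ ← V) = {f | f ⁻¹' V ∈ ℋ}` with `ℋ` Scott open in the complete lattice `O(X)`
and `V` open in `Y`. -/
def isbellTopology (X : Type u) (Y : Type v) [TopologicalSpace X] [TopologicalSpace Y] :
    TopologicalSpace C(X, Y) :=
  TopologicalSpace.generateFrom
    {S : Set C(X, Y) | ∃ ℋ : Set (Opens X), IsScottOpenLat ℋ ∧
      ∃ V : Set Y, ∃ hV : IsOpen V,
        S = {f : C(X, Y) | (⟨f ⁻¹' V, hV.preimage f.continuous⟩ : Opens X) ∈ ℋ}}

/-- The topology of pointwise convergence on `C(X, Y)`: the subspace topology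
inherited from the product `Y ^ X`. -/
def pointwiseTopology (X : Type u) (Y : Type v) [TopologicalSpace X] [TopologicalSpace Y] :
    TopologicalSpace C(X, Y) :=
  TopologicalSpace.induced (fun f : C(X, Y) => (f : X → Y)) Pi.topologicalSpace

/-- A space is sober if every irreducible closed subset is the closure of a unique point. -/
def SoberSpace (X : Type*) [TopologicalSpace X] : Prop :=
  ∀ F : Set X, IsIrreducible F → IsClosed F → ∃! x : X, F = closure ({x} : Set X)

/-- A space is a d-space if every nonempty subset directed under the specialization
order has closure equal to the closure of a unique point. -/
def DSpace (X : Type*) [TopologicalSpace X] : Prop :=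
  ∀ D : Set X, D.Nonempty → DirectedOn (fun a b : X => a ∈ closure ({b} : Set X)) D →
    ∃! y : X, closure D = closure ({y} : Set X)

/-- A space is well-filtered if for every filtered family `𝒦` of nonempty compact
saturated sets and every open `U` with `⋂ 𝒦 ⊆ U`, some member of `𝒦` is contained in `U`. -/
def WellFiltered (X : Type*) [TopologicalSpace X] : Prop :=
  ∀ 𝒦 : Set (Set X),
    (∀ K ∈ 𝒦, K.Nonempty ∧ IsCompact K ∧ K = ⋂₀ {U : Set X | IsOpen U ∧ K ⊆ U}) →
    𝒦.Nonempty →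
    (∀ K₁ ∈ 𝒦, ∀ K₂ ∈ 𝒦, ∃ K₃ ∈ 𝒦, K₃ ⊆ K₁ ∩ K₂) →
    ∀ U : Set X, IsOpen U → ⋂₀ 𝒦 ⊆ U → ∃ K ∈ 𝒦, K ⊆ U

/-- An R-subset system: an assignment, to each topological space, of a collection of
subsets, containing all singletons of T₀ spaces, consisting of irreducible sets
(for T₀ spaces), and stable under images of continuous maps between T₀ spaces. -/
structure RSubsetSystem : Type (u + 1) where
  H : ∀ (X : Type u) [TopologicalSpace X], Set (Set X)
  singleton_mem : ∀ (X : Type u) [TopologicalSpace X] [T0Space X] (x : X),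
    ({x} : Set X) ∈ H X
  irreducible : ∀ (X : Type u) [TopologicalSpace X] [T0Space X],
    ∀ A ∈ H X, IsIrreducible A
  image_mem : ∀ (X : Type u) [TopologicalSpace X] [T0Space X]
    (Y : Type u) [TopologicalSpace Y] [T0Space Y] (f : X → Y),
    Continuous f → ∀ A ∈ H X, f '' A ∈ H Y

/-- A space `X` is H-sober if every member of `H X` has closure equal to the closure of
a unique point. -/
def HSober (𝒮 : RSubsetSystem.{u}) (X : Type u) [TopologicalSpace X] : Prop :=
  ∀ A ∈ 𝒮.H X, ∃! x : X, closure A = closure ({x} : Set X)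

/-- Auxiliary: an irreducible set meets any finite intersection of open sets that it
meets individually. -/
lemma irred_meets_finset_inter {α : Type*} [TopologicalSpace α] {A : Set α}
    (hA : IsIrreducible A) {ι : Type*} (I : Finset ι) (u : ι → Set α)
    (hu : ∀ i ∈ I, IsOpen (u i)) (hne : ∀ i ∈ I, (A ∩ u i).Nonempty) :
    ∃ a ∈ A, ∀ i ∈ I, a ∈ u i := by
  classical
  induction I using Finset.induction with
  | empty => exact hA.1.imp fun a ha => ⟨ha, by simp⟩
  | @insert i I' hnotmem ih =>
    obtain ⟨a, haA, ha⟩ := ih (fun j hj => hu j (Finset.mem_insert_of_mem hj))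
      (fun j hj => hne j (Finset.mem_insert_of_mem hj))
    obtain ⟨b, hbA, hbi, hbI⟩ := hA.2 (u i) (⋂ j ∈ I', u j)
      (hu i (Finset.mem_insert_self i I'))
      (isOpen_biInter_finset fun j hj => hu j (Finset.mem_insert_of_mem hj))
      (hne i (Finset.mem_insert_self i I'))
      ⟨a, haA, Set.mem_iInter₂.mpr ha⟩
    refine ⟨b, hbA, fun j hj => ?_⟩
    rcases Finset.mem_insert.mp hj with rfl | hj
    · exact hbi
    · exact Set.mem_iInter₂.mp hbI j hj

/-- For an R-subset system H, a T₀ space X and an H-sober T₀ space Y,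
the function space C(X,Y) with the topology of pointwise convergence is H-sober. -/
theorem pointwise_hsober_of_hsober (𝒮 : RSubsetSystem.{u}) (X Y : Type u)
    [TopologicalSpace X] [TopologicalSpace Y] [T0Space X] [T0Space Y]
    (hY : HSober 𝒮 Y) :
    @HSober 𝒮 C(X, Y) (pointwiseTopology X Y) := by
  letI t : TopologicalSpace C(X, Y) := pointwiseTopology X Y
  have hind : @Topology.IsInducing C(X, Y) (X → Y) t _ ((↑) : C(X, Y) → (X → Y)) := ⟨rfl⟩
  have hemb : @Topology.IsEmbedding C(X, Y) (X → Y) t _ ((↑) : C(X, Y) → (X → Y)) :=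
    ⟨hind, DFunLike.coe_injective⟩
  haveI : T0Space C(X, Y) := hemb.t0Space
  have hev : ∀ x : X, Continuous (fun f : C(X, Y) => f x) := fun x =>
    (continuous_apply x).comp hind.continuous
  intro A hA
  have hAx : ∀ x : X, (fun f : C(X, Y) => f x) '' A ∈ 𝒮.H Y := fun x =>
    𝒮.image_mem _ _ _ (hev x) A hA
  choose g hg hgu using fun x => hY _ (hAx x)
  have key : ∀ (x : X) (V : Set Y), IsOpen V → (g x ∈ V ↔ ∃ f ∈ A, f x ∈ V) := by
    intro x V hV
    constructor
    · intro hgx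
      have hmem : g x ∈ closure ((fun f : C(X, Y) => f x) '' A) := by
        rw [hg x]; exact subset_closure rfl
      obtain ⟨y, hyV, f, hfA, hfx⟩ := mem_closure_iff.mp hmem V hV hgx
      have hfx' : f x = y := hfx
      exact ⟨f, hfA, hfx' ▸ hyV⟩
    · rintro ⟨f, hfA, hfx⟩
      have hmem : f x ∈ closure ({g x} : Set Y) := by
        rw [← hg x]; exact subset_closure ⟨f, hfA, rfl⟩
      obtain ⟨y, hyV, hy⟩ := mem_closure_iff.mp hmem V hV hfx
      rwa [← hy]
  have hgc : Continuous g := by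
    rw [continuous_def]
    intro V hV
    have : g ⁻¹' V = ⋃ f ∈ A, (f : X → Y) ⁻¹' V := by
      ext x
      simp only [Set.mem_preimage, Set.mem_iUnion]
      exact (key x V hV).trans (by simp)
    rw [this]
    exact isOpen_biUnion fun f _ => hV.preimage f.continuous
  set G : C(X, Y) := ⟨g, hgc⟩ with hGdef
  have hfle : ∀ f ∈ A, ∀ x : X, f x ∈ closure ({g x} : Set Y) := by
    intro f hfA x
    rw [← hg x]
    exact subset_closure ⟨f, hfA, rfl⟩
  have hclos : closure A = closure ({G} : Set C(X, Y)) := by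
    apply Set.Subset.antisymm
    · apply closure_minimal _ isClosed_closure
      intro f hfA
      rw [hind.closure_eq_preimage_closure_image]
      have hmem : (f : X → Y) ∈ closure ({(G : X → Y)} : Set (X → Y)) := by
        rw [← specializes_iff_mem_closure, specializes_pi]
        intro x
        rw [specializes_iff_mem_closure]
        exact hfle f hfA x
      exact closure_mono (by rintro y rfl; exact ⟨G, rfl, rfl⟩) hmem
    · apply closure_minimal _ isClosed_closure
      rintro h rfl
      rw [mem_closure_iff]
      intro U hU hGU
      obtain ⟨W, hW, rfl⟩ := hind.isOpen_iff.mp hU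
      obtain ⟨I, u, hu, hsub⟩ := isOpen_pi_iff.mp hW _ hGU
      have hirr := 𝒮.irreducible C(X, Y) A hA
      obtain ⟨f, hfA, hf⟩ := irred_meets_finset_inter hirr I
        (fun i => (fun f : C(X, Y) => f i) ⁻¹' u i)
        (fun i hi => (hu i hi).1.preimage (hev i))
        (fun i hi => by
          obtain ⟨f, hfA, hfi⟩ := (key i (u i) (hu i hi).1).mp (hu i hi).2
          exact ⟨f, hfA, hfi⟩)
      exact ⟨f, hsub fun i hi => hf i hi, hfA⟩
  exact ⟨G, hclos, fun G' hG' =>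
    (inseparable_iff_closure_eq.mpr (hG'.symm.trans hclos)).eq⟩
end

section
/- Let H be an R-subset system. A retract of an H-sober T₀ space is H-sober. That is, if X is an H-sober T₀ space, Y is a T₀ space, and there exist continuous maps f : X → Y and g : Y → X with f ∘ g = id_Y, then Y is H-sober. -/
open TopologicalSpace

universe u v

/-- A retract of an H-sober T₀ space is H-sober. -/
theorem hsober_of_retract (𝒮 : RSubsetSystem.{u}) (X Y : Type u)
    [TopologicalSpace X] [TopologicalSpace Y] [T0Space X] [T0Space Y]
    (hX : HSober 𝒮 X) (f : X → Y) (g : Y → X)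
    (hf : Continuous f) (hg : Continuous g) (hfg : f ∘ g = id) :
    HSober 𝒮 Y := by
  intro A hA
  have hgA : g '' A ∈ 𝒮.H X := 𝒮.image_mem Y X g hg A hA
  obtain ⟨x, hx, -⟩ := hX (g '' A) hgA
  have hAeq : f '' (g '' A) = A := by
    rw [← Set.image_comp, hfg, Set.image_id]
  have hcc : ∀ S : Set X, closure (f '' closure S) = closure (f '' S) := fun S =>
    ((closure_minimal (image_closure_subset_closure_image hf) isClosed_closure)).antisymm
      (closure_mono (Set.image_mono subset_closure))
  have key : closure A = closure ({f x} : Set Y) := by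
    calc closure A = closure (f '' (g '' A)) := by rw [hAeq]
      _ = closure (f '' closure (g '' A)) := (hcc _).symm
      _ = closure (f '' closure ({x} : Set X)) := by rw [hx]
      _ = closure (f '' ({x} : Set X)) := hcc _
      _ = closure ({f x} : Set Y) := by rw [Set.image_singleton]
  refine ⟨f x, key, fun y hy => ?_⟩
  have h2 := hy.symm.trans key
  exact ((specializes_iff_closure_subset.mpr h2.ge).antisymm
    (specializes_iff_closure_subset.mpr h2.le)).eq
end

section
/- Let X be a T₀ topological space and Y a d-space. Then the function space C(X,Y) of all continuous maps from X to Y, equipped with the Scott topology of its pointwise order (induced by the specialization order of Y), is a d-space. -/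
open TopologicalSpace

universe u v

section DSpaceProof

variable {X : Type*} {Y : Type*} [TopologicalSpace X] [TopologicalSpace Y]

lemma specLe_refl' (a : Y) : specLe a a := subset_closure rfl

lemma specLe_trans' {a b c : Y} (h1 : specLe a b) (h2 : specLe b c) : specLe a c := by
  have : closure ({b} : Set Y) ⊆ closure ({c} : Set Y) :=
    closure_minimal (Set.singleton_subset_iff.2 h2) isClosed_closure
  exact this h1

lemma specLe_antisymm' [T0Space Y] {a b : Y} (h1 : specLe a b) (h2 : specLe b a) : a = b := by
  have ha : b ⤳ a := specializes_iff_mem_closure.2 h1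
  have hb : a ⤳ b := specializes_iff_mem_closure.2 h2
  exact (hb.antisymm ha).eq

lemma pwLe_refl' (f : C(X, Y)) : pwLe f f := fun x => specLe_refl' _

lemma pwLe_trans' {f g h : C(X, Y)} (h1 : pwLe f g) (h2 : pwLe g h) : pwLe f h :=
  fun x => specLe_trans' (h1 x) (h2 x)

/-- Every set open in the Scott topology of `le` is an upper set. -/
lemma mem_closure_iff_top {α : Type*} (t : TopologicalSpace α) {a : α} {s : Set α} :
    a ∈ @closure α t s ↔ ∀ o, @IsOpen α t o → a ∈ o → (o ∩ s).Nonempty := by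
  letI := t; exact mem_closure_iff

lemma relScott_open_upper {α : Type*} {le : α → α → Prop} {U : Set α}
    (h : TopologicalSpace.GenerateOpen {U : Set α | relScottOpen le U} U) :
    ∀ ⦃a b : α⦄, a ∈ U → le a b → b ∈ U := by
  induction h with
  | basic U hU => exact hU.1
  | univ => intro a b _ _; trivial
  | inter U V _ _ ihU ihV => exact fun a b hab hle => ⟨ihU hab.1 hle, ihV hab.2 hle⟩
  | sUnion S _ ih =>
      intro a b hab hle
      obtain ⟨U, hU, haU⟩ := hab
      exact ⟨U, hU, ih U hU haU hle⟩

lemma mem_of_lub_relScott {α : Type*} {le : α → α → Prop} {D : Set α} {g : α} {U : Set α}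
    (hne : D.Nonempty) (hdir : DirectedOn le D) (hg : IsLUBrel le D g)
    (hU : TopologicalSpace.GenerateOpen {U : Set α | relScottOpen le U} U)
    (hgU : g ∈ U) : (D ∩ U).Nonempty := by
  induction hU with
  | basic U hU => exact hU.2 D hne hdir g hg hgU
  | univ => obtain ⟨f, hf⟩ := hne; exact ⟨f, hf, trivial⟩
  | inter U V hU hV ihU ihV =>
      obtain ⟨f₁, hf₁D, hf₁U⟩ := ihU hgU.1
      obtain ⟨f₂, hf₂D, hf₂V⟩ := ihV hgU.2
      obtain ⟨f₃, hf₃D, h13, h23⟩ := hdir f₁ hf₁D f₂ hf₂D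
      exact ⟨f₃, hf₃D, relScott_open_upper hU hf₁U h13, relScott_open_upper hV hf₂V h23⟩
  | sUnion S hS ih =>
      obtain ⟨U, hUS, hgU⟩ := hgU
      obtain ⟨f, hfD, hfU⟩ := ih U hUS hgU
      exact ⟨f, hfD, U, hUS, hfU⟩

/-- The specialization order of the Scott topology on `C(X,Y)` is the pointwise order. -/
lemma relScott_spec_iff (f g : C(X, Y)) :
    f ∈ @closure _ (relScott pwLe) ({g} : Set C(X, Y)) ↔ pwLe f g := by
  letI : TopologicalSpace C(X, Y) := relScott pwLe
  constructor
  · intro h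
    by_contra hng
    set U : Set C(X, Y) := {k | ¬ pwLe k g} with hUdef
    have hUopen : relScottOpen pwLe U := by
      constructor
      · intro a b ha hab hb
        exact ha (pwLe_trans' hab hb)
      · intro D hne hdir h hlub hhU
        by_contra hempty
        rw [Set.not_nonempty_iff_eq_empty] at hempty
        apply hhU
        refine hlub.2 g fun k hk => ?_
        by_contra hkg
        exact (Set.eq_empty_iff_forall_notMem.1 hempty k) ⟨hk, hkg⟩
    have hopen : IsOpen U := TopologicalSpace.GenerateOpen.basic U hUopen
    have := mem_closure_iff.1 h U hopen hng
    obtain ⟨k, hkU, hk⟩ := this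
    rw [Set.mem_singleton_iff] at hk
    subst hk
    exact hkU (pwLe_refl' k)
  · intro h
    rw [mem_closure_iff]
    intro o ho hfo
    exact ⟨g, relScott_open_upper ho hfo h, rfl⟩

end DSpaceProof

/-- For a T₀ space X and a d-space Y, the function space C(X,Y)
equipped with the Scott topology of its pointwise (specialization) order is a
d-space. -/
theorem scott_dspace_of_dspace (X Y : Type*)
    [TopologicalSpace X] [TopologicalSpace Y] [T0Space X] [T0Space Y]
    (hY : DSpace Y) :
    @DSpace C(X, Y) (relScott pwLe) := by
  classical
  letI : TopologicalSpace C(X, Y) := relScott pwLe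
  intro D hne hdir
  -- translate directedness to the pointwise order
  have hdir' : DirectedOn pwLe D := by
    intro f hf g hg
    obtain ⟨h, hh, h1, h2⟩ := hdir f hf g hg
    exact ⟨h, hh, (relScott_spec_iff f h).1 h1, (relScott_spec_iff g h).1 h2⟩
  -- pointwise images are directed in Y
  set Dx : X → Set Y := fun x => (fun f : C(X, Y) => f x) '' D with hDx
  have hDxne : ∀ x, (Dx x).Nonempty := fun x => hne.image _
  have hDxdir : ∀ x, DirectedOn (fun a b : Y => a ∈ closure ({b} : Set Y)) (Dx x) := by
    intro x a ha b hb
    obtain ⟨f, hf, rfl⟩ := ha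
    obtain ⟨g, hg, rfl⟩ := hb
    obtain ⟨h, hh, h1, h2⟩ := hdir' f hf g hg
    exact ⟨h x, ⟨h, hh, rfl⟩, h1 x, h2 x⟩
  -- choose the pointwise suprema
  have hsup := fun x => (hY (Dx x) (hDxne x) (hDxdir x)).choose_spec.1
  set g0 : X → Y := fun x => (hY (Dx x) (hDxne x) (hDxdir x)).choose with hg0
  -- each f ∈ D is pointwise below g0
  have hub : ∀ f ∈ D, ∀ x, specLe (f x) (g0 x) := by
    intro f hf x
    have : f x ∈ closure (Dx x) := subset_closure ⟨f, hf, rfl⟩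
    rw [hsup x] at this
    exact this
  -- g0 x is a least upper bound of Dx x
  have hlub : ∀ (x : X) (z : Y), (∀ f ∈ D, specLe (f x) z) → specLe (g0 x) z := by
    intro x z hz
    have hsub : Dx x ⊆ closure ({z} : Set Y) := by
      rintro _ ⟨f, hf, rfl⟩; exact hz f hf
    have : closure (Dx x) ⊆ closure ({z} : Set Y) :=
      closure_minimal hsub isClosed_closure
    rw [hsup x] at this
    exact this (specLe_refl' _)
  -- g0 is continuous
  have hcont : Continuous g0 := by
    rw [continuous_def]
    intro V hV
    have : g0 ⁻¹' V = ⋃ f ∈ D, (f : X → Y) ⁻¹' V := by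
      ext x
      constructor
      · intro hx
        have hx' : g0 x ∈ closure (Dx x) := by
          rw [hsup x]; exact subset_closure rfl
        obtain ⟨y', hy'V, f, hf, rfl⟩ := mem_closure_iff.1 hx' V hV hx
        exact Set.mem_biUnion hf hy'V
      · intro hx
        obtain ⟨f, hf, hfV⟩ := Set.mem_iUnion₂.1 hx
        have := hub f hf x
        obtain ⟨z, hzV, hz⟩ := mem_closure_iff.1 this V hV hfV
        rw [Set.mem_singleton_iff] at hz
        rwa [hz] at hzV
    rw [this]
    exact isOpen_biUnion fun f _ => hV.preimage f.continuous
  set g : C(X, Y) := ⟨g0, hcont⟩ with hgdef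
  have hglub : IsLUBrel pwLe D g := by
    constructor
    · intro f hf x; exact hub f hf x
    · intro h hh x
      exact hlub x (h x) fun f hf => hh f hf x
  have hclos : closure D = closure ({g} : Set C(X, Y)) := by
    apply subset_antisymm
    · refine closure_minimal ?_ isClosed_closure
      intro f hf
      exact (relScott_spec_iff f g).2 (hglub.1 f hf)
    · refine closure_minimal ?_ isClosed_closure
      intro k hk
      rw [Set.mem_singleton_iff] at hk
      subst hk
      rw [mem_closure_iff]
      intro o ho hgo
      obtain ⟨f, hfD, hfo⟩ := mem_of_lub_relScott hne hdir' hglub ho hgo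
      exact ⟨f, hfo, hfD⟩
  refine ⟨g, hclos, ?_⟩
  intro y hy
  have heq : closure ({y} : Set C(X, Y)) = closure ({g} : Set C(X, Y)) := hy ▸ hclos
  have h1 : pwLe y g := (relScott_spec_iff y g).1 (heq ▸ (subset_closure rfl))
  have h2 : pwLe g y := (relScott_spec_iff g y).1 (heq ▸ (subset_closure rfl))
  exact ContinuousMap.ext fun x => specLe_antisymm' (h1 x) (h2 x)
end

section
/- Let J = ℕ × (ℕ ∪ {ω}) be Johnstone's dcpo, ordered by (j,k) ≤ (m,n) iff (j = m and k ≤ n) or (n = ω and k ≤ m). Then for every topology τ on J with υ(J) ⊆ τ ⊆ σ(J), where υ(J) is the upper topology and σ(J) the Scott topology of J, the space (J, τ) is not well-filtered. -/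
open TopologicalSpace

universe u v

/-- Johnstone's dcpo `J = ℕ × (ℕ ∪ {ω})`, modelled as `ℕ × ℕ∞` with `ω = ⊤`. -/
abbrev JType : Type := ℕ × ℕ∞

/-- The order of Johnstone's dcpo: `(j,k) ≤ (m,n)` iff `j = m` and `k ≤ n`, or
`n = ω` and `k ≤ m`. -/
def JLe (p q : JType) : Prop :=
  (p.1 = q.1 ∧ p.2 ≤ q.2) ∨ (q.2 = ⊤ ∧ p.2 ≤ (q.1 : ℕ∞))

/-- The upper topology on Johnstone's dcpo: generated by complements of principal
ideals. -/
def upperTopJ : TopologicalSpace JType :=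
  TopologicalSpace.generateFrom {S : Set JType | ∃ x : JType, S = {y : JType | JLe y x}ᶜ}

/-- The Scott topology on Johnstone's dcpo. -/
def scottTopJ : TopologicalSpace JType := relScott JLe


section Aux

open Set

lemma relScottOpen_univ {α : Type*} (le : α → α → Prop) : relScottOpen le univ := by
  constructor
  · intro a b _ _; trivial
  · intro D hD _ _ _ _; exact hD.imp (fun d hd => ⟨hd, trivial⟩)

lemma relScottOpen_inter {α : Type*} {le : α → α → Prop} {U V : Set α}
    (hU : relScottOpen le U) (hV : relScottOpen le V) : relScottOpen le (U ∩ V) := by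
  constructor
  · intro a b ha hab; exact ⟨hU.1 ha.1 hab, hV.1 ha.2 hab⟩
  · intro D hne hdir g hg hgUV
    obtain ⟨d1, hd1D, hd1U⟩ := hU.2 D hne hdir g hg hgUV.1
    obtain ⟨d2, hd2D, hd2V⟩ := hV.2 D hne hdir g hg hgUV.2
    obtain ⟨d3, hd3D, h13, h23⟩ := hdir d1 hd1D d2 hd2D
    exact ⟨d3, hd3D, hU.1 hd1U h13, hV.1 hd2V h23⟩

lemma relScottOpen_sUnion {α : Type*} {le : α → α → Prop} {S : Set (Set α)}
    (hS : ∀ s ∈ S, relScottOpen le s) : relScottOpen le (⋃₀ S) := by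
  constructor
  · rintro a b ⟨s, hs, ha⟩ hab; exact ⟨s, hs, (hS s hs).1 ha hab⟩
  · rintro D hne hdir g hg ⟨s, hs, hgs⟩
    obtain ⟨d, hdD, hds⟩ := (hS s hs).2 D hne hdir g hg hgs
    exact ⟨d, hdD, s, hs, hds⟩

lemma isOpen_relScott {α : Type*} {le : α → α → Prop} {U : Set α}
    (h : (relScott le).IsOpen U) : relScottOpen le U := by
  have h' : TopologicalSpace.GenerateOpen {V : Set α | relScottOpen le V} U := h
  clear h
  induction h' with
  | basic s hs => exact hs
  | univ => exact relScottOpen_univ le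
  | inter s t _ _ hs ht => exact relScottOpen_inter hs ht
  | sUnion S _ hS => exact relScottOpen_sUnion hS

lemma JLe_refl (p : JType) : JLe p p := Or.inl ⟨rfl, le_refl _⟩

lemma jle_top_of_le {m k j : ℕ} (hkj : k ≤ j) :
    JLe (m, (k : ℕ∞)) (j, (⊤ : ℕ∞)) :=
  Or.inr ⟨rfl, show ((k : ℕ) : ℕ∞) ≤ ((j : ℕ) : ℕ∞) by exact_mod_cast hkj⟩

lemma exists_finite_of_top_mem {U : Set JType} (hU : relScottOpen JLe U) {m : ℕ}
    (hm : ((m, (⊤ : ℕ∞)) : JType) ∈ U) : ∃ k : ℕ, ((m, (k : ℕ∞)) : JType) ∈ U := by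
  set D : Set JType := Set.range (fun k : ℕ => ((m, (k : ℕ∞)) : JType)) with hD
  have hne : D.Nonempty := ⟨_, ⟨0, rfl⟩⟩
  have hdir : DirectedOn JLe D := by
    rintro _ ⟨k1, rfl⟩ _ ⟨k2, rfl⟩
    exact ⟨(m, ((max k1 k2 : ℕ) : ℕ∞)), ⟨max k1 k2, rfl⟩,
      Or.inl ⟨rfl, show ((k1 : ℕ) : ℕ∞) ≤ ((max k1 k2 : ℕ) : ℕ∞) by
        exact_mod_cast le_max_left k1 k2⟩,
      Or.inl ⟨rfl, show ((k2 : ℕ) : ℕ∞) ≤ ((max k1 k2 : ℕ) : ℕ∞) by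
        exact_mod_cast le_max_right k1 k2⟩⟩
  have hlub : IsLUBrel JLe D ((m, (⊤ : ℕ∞)) : JType) := by
    constructor
    · rintro _ ⟨k, rfl⟩; exact Or.inl ⟨rfl, le_top⟩
    · rintro ⟨a, b⟩ hub
      have ha : m = a := by
        by_contra hne'
        have hall : ∀ k : ℕ, (k : ℕ∞) ≤ (a : ℕ∞) := by
          intro k
          rcases hub _ ⟨k, rfl⟩ with ⟨h1, _⟩ | ⟨_, h2⟩
          · exact absurd h1 hne'
          · exact h2
        have := hall (a + 1)
        have : a + 1 ≤ a := by exact_mod_cast this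
        omega
      have hb : b = ⊤ := by
        by_contra hb'
        have hall : ∀ k : ℕ, (k : ℕ∞) ≤ b := by
          intro k
          rcases hub _ ⟨k, rfl⟩ with ⟨_, h1⟩ | ⟨h2, _⟩
          · exact h1
          · exact absurd h2 hb'
        have hbt : ((b.toNat : ℕ) : ℕ∞) = b := ENat.coe_toNat hb'
        have h1 := hall (b.toNat + 1)
        rw [← hbt] at h1
        have : b.toNat + 1 ≤ b.toNat := by exact_mod_cast h1
        omega
      subst ha; subst hb
      exact Or.inl ⟨rfl, le_refl _⟩
  obtain ⟨d, ⟨k, rfl⟩, hd⟩ := hU.2 D hne hdir _ hlub hm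
  exact ⟨k, hd⟩

/-- The compact saturated sets used in the counterexample. -/
def Kset (n : ℕ) : Set JType := {p : JType | p.2 = ⊤ ∧ n ≤ p.1}

lemma top_mem_Kset {n j : ℕ} (h : n ≤ j) : ((j, (⊤ : ℕ∞)) : JType) ∈ Kset n := ⟨rfl, h⟩

lemma Kset_compact (τ : TopologicalSpace JType)
    (h₂ : ∀ S : Set JType, @IsOpen JType τ S → @IsOpen JType scottTopJ S) (n : ℕ) :
    @IsCompact JType τ (Kset n) := by
  classical
  refine @isCompact_of_finite_subcover JType τ _ ?_
  intro ι U hUopen hcover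
  obtain ⟨i0, hi0⟩ := mem_iUnion.1 (hcover (top_mem_Kset (le_refl n)))
  have hscott : relScottOpen JLe (U i0) := isOpen_relScott (h₂ _ (hUopen i0))
  obtain ⟨k, hk⟩ := exists_finite_of_top_mem hscott hi0
  have hc : ∀ j : ℕ, ∃ i : ι, n ≤ j → ((j, (⊤ : ℕ∞)) : JType) ∈ U i := by
    intro j
    by_cases hj : n ≤ j
    · obtain ⟨i, hi⟩ := mem_iUnion.1 (hcover (top_mem_Kset hj))
      exact ⟨i, fun _ => hi⟩
    · exact ⟨i0, fun h => absurd h hj⟩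
  choose g hg using hc
  refine ⟨insert i0 ((Finset.range k).image g), ?_⟩
  rintro ⟨j, b⟩ ⟨hb, hj⟩
  dsimp at hb hj
  subst hb
  by_cases hjk : k ≤ j
  · exact mem_iUnion₂.2 ⟨i0, Finset.mem_insert_self _ _, hscott.1 hk (jle_top_of_le hjk)⟩
  · have hjk' : j < k := Nat.lt_of_not_le hjk
    exact mem_iUnion₂.2 ⟨g j,
      Finset.mem_insert_of_mem (Finset.mem_image_of_mem g (Finset.mem_range.2 hjk')),
      hg j hj⟩

lemma Kset_saturated (τ : TopologicalSpace JType)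
    (h₁ : ∀ S : Set JType, @IsOpen JType upperTopJ S → @IsOpen JType τ S) (n : ℕ) :
    Kset n = ⋂₀ {U : Set JType | @IsOpen JType τ U ∧ Kset n ⊆ U} := by
  apply subset_antisymm
  · intro p hp
    rw [mem_sInter]
    rintro U ⟨_, hKU⟩
    exact hKU hp
  · intro p hp
    by_contra hpK
    have hopen : @IsOpen JType τ {y : JType | JLe y p}ᶜ := by
      apply h₁
      exact TopologicalSpace.GenerateOpen.basic _ ⟨p, rfl⟩
    have hsub : Kset n ⊆ {y : JType | JLe y p}ᶜ := by
      rintro ⟨j, b⟩ ⟨hb, hj⟩ hle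
      dsimp at hb hj
      subst hb
      rcases hle with ⟨h1, h2⟩ | ⟨h2, h3⟩
      · exact hpK ⟨top_le_iff.1 h2, h1 ▸ hj⟩
      · exact WithTop.coe_ne_top (top_le_iff.1 h3)
    exact (mem_sInter.1 hp _ ⟨hopen, hsub⟩) (JLe_refl p)

end Aux

/-- No topology between the upper topology and the Scott topology on
Johnstone's dcpo is well-filtered. -/
theorem johnstone_not_wellFiltered (τ : TopologicalSpace JType)
    (h₁ : ∀ S : Set JType, @IsOpen JType upperTopJ S → @IsOpen JType τ S)
    (h₂ : ∀ S : Set JType, @IsOpen JType τ S → @IsOpen JType scottTopJ S) :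
    ¬ @WellFiltered JType τ := by
  intro hwf
  obtain ⟨K, hKmem, hKsub⟩ := hwf (Set.range Kset)
    (by
      rintro _ ⟨n, rfl⟩
      exact ⟨⟨_, top_mem_Kset (le_refl n)⟩, Kset_compact τ h₂ n, Kset_saturated τ h₁ n⟩)
    ⟨Kset 0, 0, rfl⟩
    (by
      rintro _ ⟨n, rfl⟩ _ ⟨m, rfl⟩
      refine ⟨Kset (max n m), ⟨max n m, rfl⟩, ?_⟩
      rintro p ⟨hp, hle⟩
      exact ⟨⟨hp, le_trans (le_max_left n m) hle⟩, ⟨hp, le_trans (le_max_right n m) hle⟩⟩)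
    ∅ (@isOpen_empty JType τ)
    (by
      intro p hp
      have h1 := Set.mem_sInter.1 hp (Kset (p.1 + 1)) ⟨p.1 + 1, rfl⟩
      exact absurd h1.2 (by omega))
  obtain ⟨n, rfl⟩ := hKmem
  exact hKsub (top_mem_Kset (le_refl n))
end

section
/- Let J = ℕ × (ℕ ∪ {ω}) be Johnstone's dcpo, ordered by (j,k) ≤ (m,n) iff (j = m and k ≤ n) or (n = ω and k ≤ m). Then there is no sober topology on J whose specialization order is the given order; more precisely, for every topology τ on J with υ(J) ⊆ τ ⊆ σ(J), where υ(J) is the upper topology and σ(J) the Scott topology of J, the space (J, τ) is not sober. -/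
open TopologicalSpace

universe u v

lemma jle_refl (x : JType) : JLe x x := Or.inl ⟨rfl, le_rfl⟩

/-- Every nonempty Scott-open subset of Johnstone's dcpo contains `(m, ⊤)` for all
sufficiently large `m`. -/
lemma scott_cofinite_top {U : Set JType} (hU : @IsOpen JType scottTopJ U)
    (hne : U.Nonempty) : ∃ n : ℕ, ∀ m : ℕ, n ≤ m → ((m, ⊤) : JType) ∈ U := by
  have key : ∀ V : Set JType,
      TopologicalSpace.GenerateOpen {W : Set JType | relScottOpen JLe W} V →
      V.Nonempty → ∃ n : ℕ, ∀ m : ℕ, n ≤ m → ((m, ⊤) : JType) ∈ V := by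
    intro V hV
    induction hV with
    | basic U hUb =>
      intro hne
      obtain ⟨⟨j, k⟩, hjk⟩ := hne
      have htop : ((j, ⊤) : JType) ∈ U := hUb.1 hjk (Or.inl ⟨rfl, le_top⟩)
      set D : Set JType := Set.range (fun n : ℕ => ((j, (n : ℕ∞)) : JType)) with hD
      have hDne : D.Nonempty := ⟨(j, (0 : ℕ∞)), ⟨0, rfl⟩⟩
      have hdir : DirectedOn JLe D := by
        rintro _ ⟨a, rfl⟩ _ ⟨b, rfl⟩
        refine ⟨(j, (max a b : ℕ∞)), ⟨max a b, rfl⟩,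
          Or.inl ⟨rfl, ?_⟩, Or.inl ⟨rfl, ?_⟩⟩
        · show ((a : ℕ∞)) ≤ ((max a b : ℕ) : ℕ∞)
          exact_mod_cast le_max_left a b
        · show ((b : ℕ∞)) ≤ ((max a b : ℕ) : ℕ∞)
          exact_mod_cast le_max_right a b
      have hlub : IsLUBrel JLe D ((j, ⊤) : JType) := by
        constructor
        · rintro _ ⟨a, rfl⟩; exact Or.inl ⟨rfl, le_top⟩
        · rintro ⟨m, n⟩ hub
          have hn : n = ⊤ := by
            by_contra hn
            obtain ⟨c, rfl⟩ := Option.ne_none_iff_exists'.mp hn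
            rcases hub (j, ((c + 1 : ℕ) : ℕ∞)) ⟨c + 1, rfl⟩ with ⟨_, h⟩ | ⟨h, _⟩
            · have h0 : ((c + 1 : ℕ) : ℕ∞) ≤ ((c : ℕ) : ℕ∞) := h
              have h' : c + 1 ≤ c := by exact_mod_cast h0
              omega
            · exact absurd h hn
          subst hn
          have hjm : j = m := by
            rcases hub (j, ((m + 1 : ℕ) : ℕ∞)) ⟨m + 1, rfl⟩ with ⟨h, _⟩ | ⟨_, h⟩
            · exact h
            · have h0 : ((m + 1 : ℕ) : ℕ∞) ≤ ((m : ℕ) : ℕ∞) := h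
              have h' : m + 1 ≤ m := by exact_mod_cast h0
              omega
          subst hjm
          exact Or.inl ⟨rfl, le_rfl⟩
      obtain ⟨d, hdD, hdU⟩ := hUb.2 D hDne hdir _ hlub htop
      obtain ⟨n, rfl⟩ := hdD
      refine ⟨n, fun m hm => hUb.1 hdU (Or.inr ⟨rfl, ?_⟩)⟩
      show ((n : ℕ∞)) ≤ ((m : ℕ) : ℕ∞)
      exact_mod_cast hm
    | univ => exact fun _ => ⟨0, fun m _ => trivial⟩
    | inter U V _ _ ihU ihV =>
      intro hne
      obtain ⟨x, hxU, hxV⟩ := hne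
      obtain ⟨n₁, h₁⟩ := ihU ⟨x, hxU⟩
      obtain ⟨n₂, h₂⟩ := ihV ⟨x, hxV⟩
      exact ⟨max n₁ n₂, fun m hm =>
        ⟨h₁ m (le_trans (le_max_left _ _) hm), h₂ m (le_trans (le_max_right _ _) hm)⟩⟩
    | sUnion S hS ihS =>
      intro hne
      obtain ⟨x, T, hTS, hxT⟩ := hne
      obtain ⟨n, hn⟩ := ihS T hTS ⟨x, hxT⟩
      exact ⟨n, fun m hm => ⟨T, hTS, hn m hm⟩⟩
  exact key U hU hne

/-- No topology between the upper topology and the Scott topology on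
Johnstone's dcpo is sober. -/
theorem johnstone_not_sober (τ : TopologicalSpace JType)
    (h₁ : ∀ S : Set JType, @IsOpen JType upperTopJ S → @IsOpen JType τ S)
    (h₂ : ∀ S : Set JType, @IsOpen JType τ S → @IsOpen JType scottTopJ S) :
    ¬ @SoberSpace JType τ := by
  intro hs
  -- closure of a singleton is contained in the principal ideal
  have hclos : ∀ x : JType, @closure JType τ ({x} : Set JType) ⊆ {z : JType | JLe z x} := by
    intro x
    have hopen : @IsOpen JType τ ({z : JType | JLe z x}ᶜ) :=
      h₁ _ (TopologicalSpace.GenerateOpen.basic _ ⟨x, rfl⟩)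
    have hcl : @IsClosed JType τ {z : JType | JLe z x} := ⟨hopen⟩
    exact closure_minimal (by rintro z rfl; exact jle_refl _) hcl
  -- univ is irreducible in τ
  have hirr : @IsIrreducible JType τ Set.univ := by
    refine ⟨⟨((0 : ℕ), (0 : ℕ∞)), trivial⟩, ?_⟩
    intro u v hu hv hune hvne
    obtain ⟨xu, _, hxu⟩ := hune
    obtain ⟨xv, _, hxv⟩ := hvne
    obtain ⟨n₁, h₁'⟩ := scott_cofinite_top (h₂ u hu) ⟨xu, hxu⟩
    obtain ⟨n₂, h₂'⟩ := scott_cofinite_top (h₂ v hv) ⟨xv, hxv⟩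
    exact ⟨(max n₁ n₂, ⊤), trivial, h₁' _ (le_max_left _ _), h₂' _ (le_max_right _ _)⟩
  obtain ⟨x, hx, -⟩ := hs Set.univ hirr (@isClosed_univ JType τ)
  -- find a point not below x
  obtain ⟨j, k⟩ := x
  rcases eq_or_ne k ⊤ with rfl | hk
  · have hy : ((j + 1 : ℕ), (⊤ : ℕ∞)) ∈ @closure JType τ ({((j : ℕ), (⊤ : ℕ∞))} : Set JType) := by
      rw [← hx]; trivial
    have : JLe ((j + 1 : ℕ), (⊤ : ℕ∞)) (j, ⊤) := hclos _ hy
    rcases this with ⟨h, _⟩ | ⟨_, h⟩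
    · omega
    · exact absurd h (by simp)
  · have hy : ((j : ℕ), (⊤ : ℕ∞)) ∈ @closure JType τ ({((j : ℕ), k)} : Set JType) := by
      rw [← hx]; trivial
    have : JLe ((j : ℕ), (⊤ : ℕ∞)) (j, k) := hclos _ hy
    rcases this with ⟨_, h⟩ | ⟨h, _⟩
    · exact hk (top_le_iff.mp h)
    · exact hk h
end
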